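/- For every w ∈ Adm(μ₀) (G = GL_d, μ₀ = (1,0,…,0)), the codimension ℓ(t_{μ₀}) − ℓ(w) equals |S(w)| − 1, where ℓ is the length function on the extended affine Weyl group. -/

import Mathlib

/-! Extended affine Weyl group `W̃ = ℤ^d ⋊ S_d` of `GL_d`, with the Bruhat order
defined via the base alcove contained in the antidominant Weyl chamber. -/

noncomputable section

/-- An element `t_λ ⋅ w̄` of the extended affine Weyl group `ℤ^d ⋊ S_d` of `GL_d`. -/
@[ext]
structure AffW (d : ℕ) where
  t : Fin d → ℤ
  w : Equiv.Perm (Fin d)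

namespace AffW

variable {d : ℕ}

instance : Mul (AffW d) := ⟨fun a b => ⟨fun i => a.t i + b.t (a.w⁻¹ i), a.w * b.w⟩⟩
instance : One (AffW d) := ⟨⟨0, 1⟩⟩

/-- The translation element `t_λ`. -/
def transl (lam : Fin d → ℤ) : AffW d := ⟨lam, 1⟩

/-- An element of the finite Weyl group `S_d`, viewed in the extended affine Weyl group. -/
def finW (w : Equiv.Perm (Fin d)) : AffW d := ⟨0, w⟩

/-- The permutation action of the finite Weyl group on (co)weights. -/
def pact (w : Equiv.Perm (Fin d)) (v : Fin d → ℤ) : Fin d → ℤ := fun i => v (w⁻¹ i)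

/-- The affine action of the extended affine Weyl group on `ℚ^d`. -/
def act (x : AffW d) (v : Fin d → ℚ) : Fin d → ℚ := fun i => (x.t i : ℚ) + v (x.w⁻¹ i)

/-- The affine action on the coweight lattice `ℤ^d`. -/
def actZ (x : AffW d) (v : Fin d → ℤ) : Fin d → ℤ := fun i => x.t i + v (x.w⁻¹ i)

/-- The barycenter of the base alcove `{v : v_0 < v_1 < ⋯ < v_{d-1} < v_0 + 1}`,
which is contained in the antidominant Weyl chamber. -/
def base (d : ℕ) : Fin d → ℚ := fun i => -(((d : ℚ) - 1 - (i : ℚ)) / (d : ℚ))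

/-- The affine root hyperplane `v_i - v_j = k` separates the base alcove from its
transform under `x`. -/
def Separates (x : AffW d) (i j : Fin d) (k : ℤ) : Prop :=
  (base d i - base d j - (k : ℚ)) * (act x (base d) i - act x (base d) j - (k : ℚ)) < 0

/-- The length of `x`, relative to a set of roots singled out by the relation `R`
(for `GL_d` itself take `R = ⊤`; for a Levi `M`, `R i j` means `e_i - e_j` is a root
of `M`): the number of affine root hyperplanes separating the base alcove from its
transform under `x`. -/
noncomputable def lenR (R : Fin d → Fin d → Prop) (x : AffW d) : ℕ :=
  Set.ncard {p : Fin d × Fin d × ℤ | p.1 < p.2.1 ∧ R p.1 p.2.1 ∧ Separates x p.1 p.2.1 p.2.2}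

/-- The length function on the extended affine Weyl group of `GL_d`. -/
noncomputable def len (x : AffW d) : ℕ := lenR (fun _ _ => True) x

/-- Affine reflections (in hyperplanes `v_i - v_j = k` with `R i j`). -/
def IsReflR (R : Fin d → Fin d → Prop) (r : AffW d) : Prop :=
  ∃ (i j : Fin d) (k : ℤ), i ≠ j ∧ R i j ∧ r.w = Equiv.swap i j ∧
    r.t = k • (Pi.single i (1 : ℤ) - Pi.single j 1)

/-- Affine reflections for `GL_d`. -/
def IsRefl (r : AffW d) : Prop := IsReflR (fun _ _ => True) r

/-- The Bruhat order (relative to `R`): `x ≤ y` iff `x` is obtained from `y` by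
successive right multiplications by affine reflections, each strictly decreasing
the length. -/
def bleR (R : Fin d → Fin d → Prop) (x y : AffW d) : Prop :=
  Relation.ReflTransGen
    (fun u v => (∃ r, IsReflR R r ∧ u = v * r) ∧ lenR R u < lenR R v) x y

/-- The Bruhat order on the extended affine Weyl group of `GL_d`, defined via the
base alcove in the antidominant chamber. -/
def ble (x y : AffW d) : Prop := bleR (fun _ _ => True) x y

/-- The `μ`-admissible set `Adm(μ) = { x : x ≤ t_λ for some λ ∈ Wμ }`. -/
def Adm (μ : Fin d → ℤ) : Set (AffW d) :=
  {x | ∃ σ : Equiv.Perm (Fin d), ble x (transl (pact σ μ))}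

/-- The Drinfeld coweight `μ₀ = (1,0,…,0)`. -/
def mu0 (d : ℕ) [NeZero d] : Fin d → ℤ := Pi.single 0 1

/-- The set of critical indices `S(w) = { j : w ≤ t_{e_j} }`. -/
def crit (x : AffW d) : Set (Fin d) := {j | ble x (transl (Pi.single j 1))}

/-- The length-zero element `τ = t_{e_d} ⋅ (d d−1 ⋯ 1)` of `Adm(μ₀)`. -/
def tau (d : ℕ) [NeZero d] : AffW d :=
  transl (Pi.single (Fin.ofNat d (d - 1)) 1) * finW (List.finRange d).reverse.formPerm

/-- The negative `ω̄_j = -ω_j` of the `j`-th fundamental coweight of `GL_d`. -/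
def omb (d j : ℕ) : Fin d → ℤ := fun i => if (i : ℕ) < j then -1 else 0

/-! ## Auxiliary development -/

theorem _root_.Equiv.Perm.inv_apply_self {α : Type*} (f : Equiv.Perm α) (x : α) :
    f⁻¹ (f x) = x := f.symm_apply_apply x
theorem _root_.Equiv.Perm.apply_inv_self {α : Type*} (f : Equiv.Perm α) (x : α) :
    f (f⁻¹ x) = x := f.apply_symm_apply x

lemma mul_w (a b : AffW d) : (a * b).w = a.w * b.w := rfl
lemma mul_t (a b : AffW d) (i : Fin d) : (a * b).t i = a.t i + b.t (a.w⁻¹ i) := rfl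

/-- The standard affine reflection. -/
def refl (p q : Fin d) (k : ℤ) : AffW d :=
  ⟨k • (Pi.single p (1 : ℤ) - Pi.single q 1), Equiv.swap p q⟩

lemma isRefl_iff {r : AffW d} : IsRefl r ↔ ∃ p q k, p ≠ q ∧ r = refl p q k := by
  constructor
  · rintro ⟨p, q, k, hpq, -, hw, ht⟩
    exact ⟨p, q, k, hpq, AffW.ext ht hw⟩
  · rintro ⟨p, q, k, hpq, rfl⟩
    exact ⟨p, q, k, hpq, trivial, rfl, rfl⟩

lemma refl_symm (p q : Fin d) (k : ℤ) : refl p q k = refl q p (-k) := by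
  unfold refl
  ext i
  · simp only [Pi.smul_apply, Pi.sub_apply, smul_eq_mul]; ring
  · simp [Equiv.swap_comm]

lemma dpos (i : Fin d) : (0 : ℚ) < d := by
  have := i.pos; exact_mod_cast this

lemma base_sub (i j : Fin d) : base d i - base d j = ((i : ℚ) - (j : ℚ)) / d := by
  have hd : (d : ℚ) ≠ 0 := ne_of_gt (dpos i)
  unfold base
  field_simp
  ring

lemma base_sub_mem {i j : Fin d} (h : i < j) :
    -1 < base d i - base d j ∧ base d i - base d j < 0 := by
  have hd : (0:ℚ) < d := dpos i
  rw [base_sub]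
  have h1 : (i : ℚ) < j := by exact_mod_cast h
  have h2 : (j : ℚ) - i < d := by
    have : (j : ℚ) < d := by exact_mod_cast j.2
    have : (0 : ℚ) ≤ i := by positivity
    linarith
  constructor
  · rw [neg_lt, ← neg_div, neg_sub, div_lt_one hd]; linarith
  · apply div_neg_of_neg_of_pos <;> linarith

/-- The integer `n` with `(act x base)_i - (act x base)_j ∈ (n-1, n)`. -/
def NZ (x : AffW d) (i j : Fin d) : ℤ :=
  x.t i - x.t j + (if x.w⁻¹ j < x.w⁻¹ i then 1 else 0)

lemma act_sub_mem (x : AffW d) {i j : Fin d} (h : i ≠ j) :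
    (NZ x i j : ℚ) - 1 < act x (base d) i - act x (base d) j ∧
      act x (base d) i - act x (base d) j < NZ x i j := by
  have hinj : x.w⁻¹ i ≠ x.w⁻¹ j := fun hc => h (x.w⁻¹.injective hc)
  have key : act x (base d) i - act x (base d) j
      = (x.t i : ℚ) - x.t j + (base d (x.w⁻¹ i) - base d (x.w⁻¹ j)) := by
    unfold act; push_cast; ring
  rcases lt_or_gt_of_ne hinj with hlt | hlt
  · have hb := base_sub_mem hlt
    have : ¬ (x.w⁻¹ j < x.w⁻¹ i) := not_lt.mpr hlt.le
    unfold NZ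
    rw [if_neg this, key]
    constructor <;> push_cast <;> linarith [hb.1, hb.2]
  · have hb := base_sub_mem hlt
    have hb1 : -1 < base d (x.w⁻¹ j) - base d (x.w⁻¹ i) := hb.1
    have hb2 : base d (x.w⁻¹ j) - base d (x.w⁻¹ i) < 0 := hb.2
    unfold NZ
    rw [if_pos hlt, key]
    push_cast
    constructor <;> linarith

lemma sep_iff (x : AffW d) {i j : Fin d} (h : i < j) (k : ℤ) :
    Separates x i j k ↔ k ∈ Finset.Ico (min (NZ x i j) 0) (max (NZ x i j) 0) := by
  have hb := base_sub_mem h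
  have hv := act_sub_mem x h.ne
  set A := base d i - base d j with hA
  set B := act x (base d) i - act x (base d) j with hB
  set n := NZ x i j with hn
  unfold Separates
  rw [← hA, ← hB]
  rw [mul_neg_iff]
  simp only [Finset.mem_Ico]
  constructor
  · rintro (⟨h1, h2⟩ | ⟨h1, h2⟩)
    · -- A - k > 0, B - k < 0 : k < A < 0 so k ≤ -1 ; n - 1 < B, k squeezed
      have hk0 : (k : ℚ) < 0 := by linarith [hb.2]
      have hk0' : k < 0 := by exact_mod_cast hk0
      have : (n : ℚ) - 1 < (k : ℚ) := by linarith [hv.1]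
      have hnk : n ≤ k := by
        have : (n : ℚ) < k + 1 := by linarith
        have : n < k + 1 := by exact_mod_cast this
        omega
      omega
    · have hk0 : (-1 : ℚ) < k := by linarith [hb.1]
      have hk0' : 0 ≤ k := by
        have : (-1 : ℤ) < k := by exact_mod_cast hk0
        omega
      have : (k : ℚ) < n := by linarith [hv.2]
      have hkn : k < n := by exact_mod_cast this
      omega
  · rintro ⟨h1, h2⟩
    rcases le_or_gt n 0 with hn0 | hn0
    · left
      have hk1 : k ≤ -1 := by omega
      have hkn : n ≤ k := by omega
      constructor
      · have : (k : ℚ) ≤ -1 := by exact_mod_cast hk1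
        linarith [hb.1]
      · have : (n : ℚ) ≤ k := by exact_mod_cast hkn
        linarith [hv.2]
    · right
      have hk1 : 0 ≤ k := by omega
      have hkn : k < n := by omega
      constructor
      · have : (0 : ℚ) ≤ k := by exact_mod_cast hk1
        linarith [hb.2]
      · have : (k : ℚ) + 1 ≤ n := by exact_mod_cast hkn
        linarith [hv.1]

/-- The set of separating hyperplanes, normalized. -/
def SepSet (x : AffW d) : Set (Fin d × Fin d × ℤ) :=
  {p | p.1 < p.2.1 ∧ Separates x p.1 p.2.1 p.2.2}

lemma len_eq_ncard (x : AffW d) : len x = (SepSet x).ncard := by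
  unfold len lenR SepSet
  congr 1
  ext p
  simp

/-- `SepSet` as a finset. -/
def sepFS (x : AffW d) : Finset (Fin d × Fin d × ℤ) :=
  (Finset.univ.filter (fun ij : Fin d × Fin d => ij.1 < ij.2)).biUnion
    (fun ij => (Finset.Ico (min (NZ x ij.1 ij.2) 0) (max (NZ x ij.1 ij.2) 0)).image
      (fun k => (ij.1, ij.2, k)))

lemma sepSet_eq (x : AffW d) : SepSet x = ↑(sepFS x) := by
  ext ⟨i, j, k⟩
  simp only [SepSet, sepFS, Set.mem_setOf_eq, Finset.coe_biUnion, Finset.mem_coe,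
    Finset.mem_biUnion, Finset.mem_filter, Finset.mem_univ, true_and, Finset.mem_image,
    Set.mem_iUnion]
  constructor
  · rintro ⟨hij, hsep⟩
    exact ⟨(i, j), hij, k, (sep_iff x hij k).mp hsep, rfl⟩
  · rintro ⟨ij, hij, k', hk', hk⟩
    obtain ⟨rfl, rfl, rfl⟩ : ij.1 = i ∧ ij.2 = j ∧ k' = k := by
      simpa [Prod.ext_iff] using hk
    exact ⟨hij, (sep_iff x hij k').mpr hk'⟩

lemma sepSet_finite (x : AffW d) : (SepSet x).Finite := by
  rw [sepSet_eq]; exact (sepFS x).finite_toSet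

lemma len_eq_sum (x : AffW d) :
    len x = ∑ ij ∈ Finset.univ.filter (fun ij : Fin d × Fin d => ij.1 < ij.2),
      (NZ x ij.1 ij.2).natAbs := by
  rw [len_eq_ncard, sepSet_eq, Set.ncard_coe_finset]
  unfold sepFS
  rw [Finset.card_biUnion]
  · apply Finset.sum_congr rfl
    intro ij _
    rw [Finset.card_image_of_injective _ (fun a b h => by simpa [Prod.ext_iff] using h)]
    rw [Int.card_Ico]
    omega
  · intro a _ b _ hab
    simp only [Finset.disjoint_left, Finset.mem_image]
    rintro p ⟨k1, _, rfl⟩ ⟨k2, _, h2⟩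
    exact hab (by ext <;> simp_all [Prod.ext_iff])

/-! ## Part B: descents land on separating hyperplanes -/

/-- Affine functional attached to a triple. -/
def Gf (τ : Fin d × Fin d × ℤ) (f : Fin d → ℚ) : ℚ := f τ.1 - f τ.2.1 - (τ.2.2 : ℚ)

def chi (a b : Fin d) (κ : ℤ) (i : Fin d) : ℤ := if i = a then κ else if i = b then -κ else 0

/-- Action of the reflection `s_{(a,b,κ)}` on triples. -/
def sT (a b : Fin d) (κ : ℤ) (τ : Fin d × Fin d × ℤ) : Fin d × Fin d × ℤ :=
  (Equiv.swap a b τ.1, Equiv.swap a b τ.2.1, τ.2.2 - chi a b κ τ.1 + chi a b κ τ.2.1)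

/-- Action of the reflection `s_{(a,b,κ)}` on points. -/
def sPt (a b : Fin d) (κ : ℤ) (f : Fin d → ℚ) : Fin d → ℚ :=
  fun i => f (Equiv.swap a b i) + (chi a b κ i : ℚ)

def flT (τ : Fin d × Fin d × ℤ) : Fin d × Fin d × ℤ := (τ.2.1, τ.1, -τ.2.2)

def nT (τ : Fin d × Fin d × ℤ) : Fin d × Fin d × ℤ := if τ.1 < τ.2.1 then τ else flT τ

lemma Gf_sPt (a b : Fin d) (κ : ℤ) (τ : Fin d × Fin d × ℤ) (f : Fin d → ℚ) :
    Gf τ (sPt a b κ f) = Gf (sT a b κ τ) f := by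
  simp only [Gf, sPt, sT]
  push_cast
  ring

lemma chi_swap {a b : Fin d} (hab : a ≠ b) (κ : ℤ) (i : Fin d) :
    chi a b κ (Equiv.swap a b i) = - chi a b κ i := by
  rcases eq_or_ne i a with rfl | hia
  · simp [chi, Equiv.swap_apply_left, hab.symm, hab]
  · rcases eq_or_ne i b with rfl | hib
    · simp [chi, Equiv.swap_apply_right, hab, hia]
    · rw [Equiv.swap_apply_of_ne_of_ne hia hib]
      simp [chi, hia, hib]

lemma sT_sT {a b : Fin d} (hab : a ≠ b) (κ : ℤ) (τ : Fin d × Fin d × ℤ) :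
    sT a b κ (sT a b κ τ) = τ := by
  obtain ⟨i, j, m⟩ := τ
  simp only [sT, Equiv.swap_apply_self, chi_swap hab]
  refine Prod.ext rfl (Prod.ext rfl ?_)
  ring

lemma Gf_flT (τ : Fin d × Fin d × ℤ) (f : Fin d → ℚ) : Gf (flT τ) f = - Gf τ f := by
  simp only [Gf, flT]
  push_cast
  ring

lemma sT_flT (a b : Fin d) (κ : ℤ) (τ : Fin d × Fin d × ℤ) :
    sT a b κ (flT τ) = flT (sT a b κ τ) := by
  obtain ⟨i, j, m⟩ := τ
  refine Prod.ext rfl (Prod.ext rfl ?_)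
  simp only [sT, flT, chi]
  by_cases h1 : i = a <;> by_cases h2 : j = a <;> by_cases h3 : i = b <;> by_cases h4 : j = b <;>
    simp only [h1, h2, h3, h4, if_true, if_false] <;> ring

lemma flT_flT (τ : Fin d × Fin d × ℤ) : flT (flT τ) = τ := by
  obtain ⟨i, j, m⟩ := τ; simp [flT]

lemma sT_base {a b : Fin d} (hab : a ≠ b) (κ : ℤ) : sT a b κ (a, b, κ) = flT (a, b, κ) := by
  refine Prod.ext ?_ (Prod.ext ?_ ?_) <;>
    simp [sT, flT, chi, Equiv.swap_apply_left, Equiv.swap_apply_right, hab, hab.symm]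

lemma sep_Gf (x : AffW d) (τ : Fin d × Fin d × ℤ) :
    Separates x τ.1 τ.2.1 τ.2.2 ↔ Gf τ (base d) * Gf τ (act x (base d)) < 0 := Iff.rfl

lemma Gf_base_ne {τ : Fin d × Fin d × ℤ} (h : τ.1 ≠ τ.2.1) : Gf τ (base d) ≠ 0 := by
  intro hc
  have := base_sub τ.1 τ.2.1
  rcases h.lt_or_gt with h' | h'
  · have hb := base_sub_mem h'
    have h1 : -1 < (τ.2.2 : ℚ) ∧ (τ.2.2 : ℚ) < 0 := by
      unfold Gf at hc
      constructor <;> linarith [hb.1, hb.2]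
    have : -1 < τ.2.2 ∧ τ.2.2 < 0 := ⟨by exact_mod_cast h1.1, by exact_mod_cast h1.2⟩
    omega
  · have hb := base_sub_mem h'
    have h1 : 0 < (τ.2.2 : ℚ) ∧ (τ.2.2 : ℚ) < 1 := by
      unfold Gf at hc
      constructor <;> [linarith [hb.2]; linarith [hb.1]]
    have : 0 < τ.2.2 ∧ τ.2.2 < 1 := ⟨by exact_mod_cast h1.1, by exact_mod_cast h1.2⟩
    omega

lemma Gf_act_ne (x : AffW d) {τ : Fin d × Fin d × ℤ} (h : τ.1 ≠ τ.2.1) :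
    Gf τ (act x (base d)) ≠ 0 := by
  intro hc
  obtain ⟨h1, h2⟩ := act_sub_mem x h
  unfold Gf at hc
  set n := NZ x τ.1 τ.2.1
  have e1 : (n : ℚ) - 1 < τ.2.2 := by linarith
  have e2 : (τ.2.2 : ℚ) < n := by linarith
  have e1' : n - 1 < τ.2.2 := by exact_mod_cast e1
  have e2' : τ.2.2 < n := by exact_mod_cast e2
  omega

lemma act_mul_refl (x : AffW d) (p q : Fin d) (k : ℤ) (hpq : p ≠ q) :
    act (x * refl p q k) (base d) =
      sPt (x.w p) (x.w q) (k + x.t (x.w p) - x.t (x.w q)) (act x (base d)) := by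
  funext i
  have habs : x.w p ≠ x.w q := fun hc => hpq (x.w.injective hc)
  have hwinv : ∀ j, (x * refl p q k).w⁻¹ j = Equiv.swap p q (x.w⁻¹ j) := by
    intro j
    rw [mul_w]
    unfold refl
    simp [mul_inv_rev, Equiv.swap_inv, Equiv.Perm.mul_apply]
  have hep : x.w⁻¹ (x.w p) = p := Equiv.Perm.inv_apply_self x.w p
  have heq' : x.w⁻¹ (x.w q) = q := Equiv.Perm.inv_apply_self x.w q
  by_cases hip : i = x.w p
  · subst hip
    have e2 : (x * refl p q k).w⁻¹ (x.w p) = q := by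
      rw [hwinv, hep, Equiv.swap_apply_left]
    have e3 : (refl p q k).t p = k := by
      unfold refl
      simp [Pi.single_eq_of_ne hpq]
    simp only [act, sPt, chi, mul_t, hep, e2, e3, Equiv.swap_apply_left, if_pos rfl, heq']
    push_cast
    ring
  · by_cases hiq : i = x.w q
    · subst hiq
      have e2 : (x * refl p q k).w⁻¹ (x.w q) = p := by
        rw [hwinv, heq', Equiv.swap_apply_right]
      have e3 : (refl p q k).t q = -k := by
        unfold refl
        simp [Pi.single_eq_of_ne hpq.symm]
      simp only [act, sPt, chi, mul_t, heq', e2, e3, Equiv.swap_apply_right,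
        if_neg habs.symm, if_pos rfl, hep]
      push_cast
      ring
    · have hp : x.w⁻¹ i ≠ p := fun hc => hip (by rw [← hc, Equiv.Perm.apply_inv_self])
      have hq : x.w⁻¹ i ≠ q := fun hc => hiq (by rw [← hc, Equiv.Perm.apply_inv_self])
      have e2 : (x * refl p q k).w⁻¹ i = x.w⁻¹ i := by
        rw [hwinv, Equiv.swap_apply_of_ne_of_ne hp hq]
      have e3 : (refl p q k).t (x.w⁻¹ i) = 0 := by
        unfold refl
        show (k • (Pi.single p (1:ℤ) - Pi.single q (1:ℤ)) : Fin d → ℤ) (x.w⁻¹ i) = 0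
        rw [Pi.smul_apply, Pi.sub_apply, Pi.single_eq_of_ne hp, Pi.single_eq_of_ne hq, sub_zero,
          smul_zero]
      simp only [act, sPt, chi, mul_t, e2, e3, Equiv.swap_apply_of_ne_of_ne hip hiq,
        if_neg hip, if_neg hiq]
      push_cast
      ring

/-- The wedge argument: a convex region swapped with its mirror cannot meet the mirror
hyperplane, hence lies strictly on one side of it. -/
lemma wedge {a b : Fin d} (hab : a ≠ b) (κ : ℤ) (τ : Fin d × Fin d × ℤ)
    (β u : Fin d → ℚ) (ε : ℚ) (_hε : ε = 1 ∨ ε = -1)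
    (h1 : 0 < ε * Gf τ β) (h2 : ε * Gf (sT a b κ τ) β < 0)
    (h3 : 0 < ε * Gf τ u) (h4 : ε * Gf (sT a b κ τ) u < 0)
    (hβ : Gf (a, b, κ) β ≠ 0) (hu : Gf (a, b, κ) u ≠ 0) :
    0 < Gf (a, b, κ) β * Gf (a, b, κ) u := by
  by_contra hcon
  push_neg at hcon
  have hprod : Gf (a, b, κ) β * Gf (a, b, κ) u < 0 :=
    lt_of_le_of_ne hcon (mul_ne_zero hβ hu)
  set hβv := Gf (a, b, κ) β with hhβv
  set huv := Gf (a, b, κ) u with hhuv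
  have hne : hβv - huv ≠ 0 := by
    intro hc
    have heq2 : hβv = huv := by linarith
    rw [heq2] at hprod
    exact absurd hprod (not_lt.mpr (mul_self_nonneg huv))
  set θ : ℚ := hβv / (hβv - huv) with hθ
  have hθ0 : 0 < θ ∧ θ < 1 := by
    rcases mul_neg_iff.mp hprod with ⟨hp, hn⟩ | ⟨hn, hp⟩
    · constructor
      · apply div_pos hp; linarith
      · rw [div_lt_one (by linarith)]; linarith
    · constructor
      · apply div_pos_of_neg_of_neg hn; linarith
      · rw [div_lt_one_of_neg (by linarith)]; linarith
  set z : Fin d → ℚ := fun i => β i + θ * (u i - β i) with hz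
  have haff : ∀ τ' : Fin d × Fin d × ℤ, Gf τ' z = Gf τ' β + θ * (Gf τ' u - Gf τ' β) := by
    intro τ'
    simp only [Gf, hz]
    ring
  have hz0 : Gf (a, b, κ) z = 0 := by
    rw [haff, ← hhβv, ← hhuv, hθ]
    field_simp
    ring
  have hzab : z a - z b - (κ : ℚ) = 0 := hz0
  have hfix : sPt a b κ z = z := by
    funext i
    simp only [sPt, chi]
    by_cases hia : i = a
    · subst hia
      rw [Equiv.swap_apply_left, if_pos rfl]
      linarith
    · by_cases hib : i = b
      · subst hib
        rw [Equiv.swap_apply_right, if_neg hab.symm, if_pos rfl]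
        push_cast
        linarith
      · rw [Equiv.swap_apply_of_ne_of_ne hia hib, if_neg hia, if_neg hib]
        simp
  have heq : Gf τ z = Gf (sT a b κ τ) z := by
    conv_lhs => rw [← hfix]
    rw [Gf_sPt]
  have hpos : 0 < ε * Gf τ z := by
    rw [haff]
    have e1 : ε * Gf τ z = (1 - θ) * (ε * Gf τ β) + θ * (ε * Gf τ u) := by
      rw [haff]; ring
    nlinarith [hθ0.1, hθ0.2]
  have hneg : ε * Gf (sT a b κ τ) z < 0 := by
    have e1 : ε * Gf (sT a b κ τ) z
        = (1 - θ) * (ε * Gf (sT a b κ τ) β) + θ * (ε * Gf (sT a b κ τ) u) := by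
      rw [haff]; ring
    nlinarith [hθ0.1, hθ0.2]
  rw [heq] at hpos
  linarith

/-- Key lemma: if the image hyperplane of the reflection does not separate, then right
multiplication by the reflection does not decrease length. -/
lemma not_sep_le (x : AffW d) (p q : Fin d) (k : ℤ) (hpq : p ≠ q)
    (hns : ¬ Separates x (x.w p) (x.w q) (k + x.t (x.w p) - x.t (x.w q))) :
    len x ≤ len (x * refl p q k) := by
  classical
  set a := x.w p with ha
  set b := x.w q with hb
  set κ := k + x.t (x.w p) - x.t (x.w q) with hκ
  have hab : a ≠ b := fun hc => hpq (x.w.injective hc)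
  set β : Fin d → ℚ := base d with hβ
  set v : Fin d → ℚ := act x (base d) with hv
  have hact : act (x * refl p q k) (base d) = sPt a b κ v := act_mul_refl x p q k hpq
  -- the H'-hyperplane does not separate, with nonvanishing
  have hHβ : Gf (a, b, κ) β ≠ 0 := Gf_base_ne hab
  have hHv : Gf (a, b, κ) v ≠ 0 := Gf_act_ne x hab
  have hH : 0 < Gf (a, b, κ) β * Gf (a, b, κ) v := by
    rcases (mul_ne_zero hHβ hHv).lt_or_gt with h | h
    · exact absurd h hns
    · exact h
  rw [len_eq_ncard, len_eq_ncard]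
  have hsepv' : ∀ τ : Fin d × Fin d × ℤ,
      Separates (x * refl p q k) τ.1 τ.2.1 τ.2.2 ↔ Gf τ β * Gf (sT a b κ τ) v < 0 := by
    intro τ
    rw [sep_Gf, hact, Gf_sPt]
  -- main claim
  have hmain : ∀ τ ∈ SepSet x, ¬ Separates (x * refl p q k) τ.1 τ.2.1 τ.2.2 →
      Gf (sT a b κ τ) β * Gf τ v < 0 := by
    rintro τ ⟨hlt, hsep⟩ hnot
    have hne : τ.1 ≠ τ.2.1 := hlt.ne
    have hne' : (sT a b κ τ).1 ≠ (sT a b κ τ).2.1 := by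
      simp only [sT]
      exact fun hc => hne ((Equiv.swap a b).injective hc)
    have hAβ : Gf τ β ≠ 0 := Gf_base_ne hne
    have hAv : Gf τ v ≠ 0 := Gf_act_ne x hne
    have hBβ : Gf (sT a b κ τ) β ≠ 0 := Gf_base_ne hne'
    have hBv : Gf (sT a b κ τ) v ≠ 0 := Gf_act_ne x hne'
    have hP1 : Gf τ β * Gf τ v < 0 := (sep_Gf x τ).mp hsep
    have hP2 : 0 < Gf τ β * Gf (sT a b κ τ) v := by
      rcases (mul_ne_zero hAβ hBv).lt_or_gt with h | h
      · exact absurd ((hsepv' τ).mpr h) hnot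
      · exact h
    by_contra hcon
    push_neg at hcon
    have hP3 : 0 < Gf (sT a b κ τ) β * Gf τ v :=
      lt_of_le_of_ne hcon (Ne.symm (mul_ne_zero hBβ hAv))
    -- wedge with u := sPt v
    set u : Fin d → ℚ := sPt a b κ v with hu
    set ε : ℚ := if 0 < Gf τ β then 1 else -1 with hε
    have hεval : ε = 1 ∨ ε = -1 := by
      rcases ite_eq_or_eq (0 < Gf τ β) (1:ℚ) (-1:ℚ) with h | h
      · exact Or.inl h
      · exact Or.inr h
    have hεβ : 0 < ε * Gf τ β := by
      rcases hAβ.lt_or_gt with h | h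
      · rw [hε, if_neg (not_lt.mpr h.le)]; linarith
      · rw [hε, if_pos h]; linarith
    have hεAv : ε * Gf τ v < 0 := by
      rcases hεval with h | h <;> rw [h] at hεβ ⊢ <;> nlinarith
    have hεBv : 0 < ε * Gf (sT a b κ τ) v := by
      rcases hεval with h | h <;> rw [h] at hεβ ⊢ <;> nlinarith
    have hεBβ : ε * Gf (sT a b κ τ) β < 0 := by
      rcases hεval with h | h <;> rw [h] at hεAv ⊢ <;> nlinarith
    have hGu1 : Gf τ u = Gf (sT a b κ τ) v := by rw [hu, Gf_sPt]
    have hGu2 : Gf (sT a b κ τ) u = Gf τ v := by rw [hu, Gf_sPt, sT_sT hab]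
    have hGu3 : Gf (a, b, κ) u = - Gf (a, b, κ) v := by
      rw [hu, Gf_sPt, sT_base hab, Gf_flT]
    have := wedge hab κ τ β u ε hεval hεβ hεBβ (by rw [hGu1]; exact hεBv)
      (by rw [hGu2]; exact hεAv) hHβ (by rw [hGu3]; exact neg_ne_zero.mpr hHv)
    rw [hGu3] at this
    nlinarith
  refine Set.ncard_le_ncard_of_injOn
    (fun τ => if Separates (x * refl p q k) τ.1 τ.2.1 τ.2.2 then τ else nT (sT a b κ τ))
    ?_ ?_ (sepSet_finite _)
  · -- maps to
    rintro τ hτ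
    obtain ⟨hlt, hsep⟩ := hτ
    by_cases hc : Separates (x * refl p q k) τ.1 τ.2.1 τ.2.2
    · rw [if_pos hc]; exact ⟨hlt, hc⟩
    · rw [if_neg hc]
      have hkey := hmain τ ⟨hlt, hsep⟩ hc
      have hne' : (sT a b κ τ).1 ≠ (sT a b κ τ).2.1 := by
        simp only [sT]
        exact fun hcc => hlt.ne ((Equiv.swap a b).injective hcc)
      have hsep2 : Separates (x * refl p q k) (sT a b κ τ).1 (sT a b κ τ).2.1
          (sT a b κ τ).2.2 := by
        rw [hsepv' (sT a b κ τ), sT_sT hab]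
        exact hkey
      unfold nT
      by_cases hord : (sT a b κ τ).1 < (sT a b κ τ).2.1
      · rw [if_pos hord]; exact ⟨hord, hsep2⟩
      · rw [if_neg hord]
        refine ⟨?_, ?_⟩
        · simp only [flT]
          exact lt_of_le_of_ne (not_lt.mp hord) (Ne.symm hne')
        · rw [sep_Gf, Gf_flT, Gf_flT]
          have := (sep_Gf (x * refl p q k) (sT a b κ τ)).mp hsep2
          nlinarith
  · -- injectivity
    rintro τ1 hτ1 τ2 hτ2 heq
    obtain ⟨hlt1, hsep1⟩ := hτ1
    obtain ⟨hlt2, hsep2⟩ := hτ2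
    simp only at heq
    have flip_ne : ∀ σ1 σ2 : Fin d × Fin d × ℤ, σ1.1 < σ1.2.1 → σ2.1 < σ2.2.1 →
        σ1 ≠ flT σ2 := by
      rintro σ1 σ2 h1 h2 rfl
      simp only [flT] at h1
      exact absurd h1 (not_lt.mpr h2.le)
    have hnT : ∀ σ1 σ2 : Fin d × Fin d × ℤ, nT σ1 = nT σ2 → σ1 = σ2 ∨ σ1 = flT σ2 := by
      intro σ1 σ2 h
      unfold nT at h
      split_ifs at h
      · exact Or.inl h
      · exact Or.inr h
      · right
        rw [← h, flT_flT]
      · left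
        have h' := congrArg flT h
        rwa [flT_flT, flT_flT] at h'
    -- mixed-case contradiction helper
    have hmixed : ∀ σ1 σ2 : Fin d × Fin d × ℤ, σ1 ∈ SepSet x → σ2 ∈ SepSet x →
        Separates (x * refl p q k) σ1.1 σ1.2.1 σ1.2.2 →
        ¬ Separates (x * refl p q k) σ2.1 σ2.2.1 σ2.2.2 →
        σ1 = nT (sT a b κ σ2) → False := by
      rintro σ1 σ2 ⟨hl1, hs1⟩ ⟨hl2, hs2⟩ hin hout heqq
      have hne2 : σ2.1 ≠ σ2.2.1 := hl2.ne
      have hA_v : Gf σ2 β * Gf σ2 v < 0 := (sep_Gf x σ2).mp hs2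
      have hABv : 0 < Gf σ2 β * Gf (sT a b κ σ2) v := by
        have h1 : Gf σ2 β ≠ 0 := Gf_base_ne hne2
        have hne2' : (sT a b κ σ2).1 ≠ (sT a b κ σ2).2.1 := by
          simp only [sT]
          exact fun hc => hne2 ((Equiv.swap a b).injective hc)
        have h2 : Gf (sT a b κ σ2) v ≠ 0 := Gf_act_ne x hne2'
        rcases (mul_ne_zero h1 h2).lt_or_gt with h | h
        · exact absurd ((hsepv' σ2).mpr h) hout
        · exact h
      -- σ1 = sT σ2 or flT (sT σ2); in both cases products are the same
      have hGσ1 : (Gf σ1 β = Gf (sT a b κ σ2) β ∧ Gf σ1 v = Gf (sT a b κ σ2) v ∧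
          Gf (sT a b κ σ1) v = Gf σ2 v) ∨
          (Gf σ1 β = - Gf (sT a b κ σ2) β ∧ Gf σ1 v = - Gf (sT a b κ σ2) v ∧
          Gf (sT a b κ σ1) v = - Gf σ2 v) := by
        unfold nT at heqq
        split_ifs at heqq
        · left
          subst heqq
          exact ⟨rfl, rfl, by rw [sT_sT hab]⟩
        · right
          subst heqq
          refine ⟨Gf_flT _ _, Gf_flT _ _, ?_⟩
          rw [sT_flT, Gf_flT, sT_sT hab]
      have hBB : Gf (sT a b κ σ2) β * Gf (sT a b κ σ2) v < 0 := by
        have := (sep_Gf x σ1).mp hs1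
        rcases hGσ1 with ⟨e1, e2, -⟩ | ⟨e1, e2, -⟩ <;> rw [e1, e2] at this <;> nlinarith
      have hBAv : Gf (sT a b κ σ2) β * Gf σ2 v < 0 := by
        have hthis := (hsepv' σ1).mp hin
        rcases hGσ1 with ⟨e1, -, e3⟩ | ⟨e1, -, e3⟩ <;> rw [e1, e3] at hthis <;> nlinarith
      have hkey : Gf σ2 β * Gf σ2 v * (Gf (sT a b κ σ2) β * Gf (sT a b κ σ2) v)
          = Gf (sT a b κ σ2) β * Gf σ2 v * (Gf σ2 β * Gf (sT a b κ σ2) v) := by ring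
      nlinarith [mul_pos_of_neg_of_neg hA_v hBB, mul_neg_of_neg_of_pos hBAv hABv]
    split_ifs at heq with h1 h2 h2
    · exact heq
    · exact (hmixed τ1 τ2 ⟨hlt1, hsep1⟩ ⟨hlt2, hsep2⟩ h1 h2 heq).elim
    · exact (hmixed τ2 τ1 ⟨hlt2, hsep2⟩ ⟨hlt1, hsep1⟩ h2 h1 heq.symm).elim
    · rcases hnT _ _ heq with h | h
      · have := congrArg (sT a b κ) h
        rwa [sT_sT hab, sT_sT hab] at this
      · exfalso
        have := congrArg (sT a b κ) h
        rw [sT_sT hab, sT_flT, sT_sT hab] at this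
        exact flip_ne τ1 τ2 hlt1 hlt2 this

/-! ## Part C: the explicit admissible elements `x_S` -/

section XS

variable (S : Finset (Fin d)) (hS : S.Nonempty)

/-- Cyclic predecessor within `S`. -/
def sPredF (g : Fin d) : Fin d :=
  if h : (S.filter (fun b => b < g)).Nonempty then (S.filter (fun b => b < g)).max' h
  else S.max' hS

/-- Cyclic successor within `S`. -/
def sSuccF (g : Fin d) : Fin d :=
  if h : (S.filter (fun b => g < b)).Nonempty then (S.filter (fun b => g < b)).min' h
  else S.min' hS

lemma sPredF_pos {g : Fin d} (h : (S.filter (fun b => b < g)).Nonempty) :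
    sPredF S hS g = (S.filter (fun b => b < g)).max' h := dif_pos h

lemma sSuccF_pos {g : Fin d} (h : (S.filter (fun b => g < b)).Nonempty) :
    sSuccF S hS g = (S.filter (fun b => g < b)).min' h := dif_pos h

lemma sPredF_of_empty {g : Fin d} (h : ¬ (S.filter (fun b => b < g)).Nonempty) :
    sPredF S hS g = S.max' hS := dif_neg h

lemma sSuccF_of_empty {g : Fin d} (h : ¬ (S.filter (fun b => g < b)).Nonempty) :
    sSuccF S hS g = S.min' hS := dif_neg h

lemma sPredF_mem (g : Fin d) : sPredF S hS g ∈ S := by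
  by_cases h : (S.filter (fun b => b < g)).Nonempty
  · rw [sPredF_pos S hS h]
    exact Finset.filter_subset _ _ ((S.filter (fun b => b < g)).max'_mem h)
  · rw [sPredF_of_empty S hS h]
    exact S.max'_mem hS

lemma sSuccF_mem (g : Fin d) : sSuccF S hS g ∈ S := by
  by_cases h : (S.filter (fun b => g < b)).Nonempty
  · rw [sSuccF_pos S hS h]
    exact Finset.filter_subset _ _ ((S.filter (fun b => g < b)).min'_mem h)
  · rw [sSuccF_of_empty S hS h]
    exact S.min'_mem hS

lemma sPredF_lt {g : Fin d} (h : (S.filter (fun b => b < g)).Nonempty) :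
    sPredF S hS g < g := by
  rw [sPredF_pos S hS h]
  exact (Finset.mem_filter.mp ((S.filter (fun b => b < g)).max'_mem h)).2

lemma sSuccF_gt {g : Fin d} (h : (S.filter (fun b => g < b)).Nonempty) :
    g < sSuccF S hS g := by
  rw [sSuccF_pos S hS h]
  exact (Finset.mem_filter.mp ((S.filter (fun b => g < b)).min'_mem h)).2

lemma lt_filter_nonempty {g b : Fin d} (hb : b ∈ S) (h : b < g) :
    (S.filter (fun c => c < g)).Nonempty :=
  ⟨b, Finset.mem_filter.mpr ⟨hb, h⟩⟩

lemma gt_filter_nonempty {g b : Fin d} (hb : b ∈ S) (h : g < b) :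
    (S.filter (fun c => g < c)).Nonempty :=
  ⟨b, Finset.mem_filter.mpr ⟨hb, h⟩⟩

lemma le_sPredF {g b : Fin d} (hb : b ∈ S) (hbg : b < g) : b ≤ sPredF S hS g := by
  rw [sPredF_pos S hS (lt_filter_nonempty S hb hbg)]
  refine Finset.le_max' _ b ?_
  rw [Finset.mem_filter]
  exact ⟨hb, hbg⟩

lemma sSuccF_le {g b : Fin d} (hb : b ∈ S) (hgb : g < b) : sSuccF S hS g ≤ b := by
  rw [sSuccF_pos S hS (gt_filter_nonempty S hb hgb)]
  refine Finset.min'_le _ b ?_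
  rw [Finset.mem_filter]
  exact ⟨hb, hgb⟩

lemma sSuccF_max : sSuccF S hS (S.max' hS) = S.min' hS := by
  apply sSuccF_of_empty
  rintro ⟨b, hb⟩
  rw [Finset.mem_filter] at hb
  exact absurd hb.2 (not_lt.mpr (S.le_max' b hb.1))

lemma sPredF_min : sPredF S hS (S.min' hS) = S.max' hS := by
  apply sPredF_of_empty
  rintro ⟨b, hb⟩
  rw [Finset.mem_filter] at hb
  exact absurd hb.2 (not_lt.mpr (S.min'_le b hb.1))

lemma sSuccF_sPredF {a : Fin d} (ha : a ∈ S) : sSuccF S hS (sPredF S hS a) = a := by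
  by_cases h : (S.filter (fun b => b < a)).Nonempty
  · have hp : sPredF S hS a < a := sPredF_lt S hS h
    have h1 : sSuccF S hS (sPredF S hS a) ≤ a := sSuccF_le S hS ha hp
    have h2 : ¬ (sSuccF S hS (sPredF S hS a) < a) := by
      intro hc
      have hmem : sSuccF S hS (sPredF S hS a) ∈ S := sSuccF_mem S hS _
      have hle : sSuccF S hS (sPredF S hS a) ≤ sPredF S hS a := le_sPredF S hS hmem hc
      have hgt : sPredF S hS a < sSuccF S hS (sPredF S hS a) :=
        sSuccF_gt S hS (gt_filter_nonempty S ha hp)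
      exact absurd hle (not_le.mpr hgt)
    exact le_antisymm h1 (not_lt.mp h2)
  · have hmin : a = S.min' hS := by
      apply le_antisymm _ (S.min'_le a ha)
      apply Finset.le_min'
      intro b hb
      by_contra hba
      push_neg at hba
      exact h (lt_filter_nonempty S hb hba)
    rw [sPredF_of_empty S hS h, sSuccF_max, hmin]

lemma sPredF_sSuccF {a : Fin d} (ha : a ∈ S) : sPredF S hS (sSuccF S hS a) = a := by
  by_cases h : (S.filter (fun b => a < b)).Nonempty
  · have hp : a < sSuccF S hS a := sSuccF_gt S hS h
    have h1 : a ≤ sPredF S hS (sSuccF S hS a) := le_sPredF S hS ha hp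
    have h2 : ¬ (a < sPredF S hS (sSuccF S hS a)) := by
      intro hc
      have hmem : sPredF S hS (sSuccF S hS a) ∈ S := sPredF_mem S hS _
      have hle : sSuccF S hS a ≤ sPredF S hS (sSuccF S hS a) := sSuccF_le S hS hmem hc
      have hlt : sPredF S hS (sSuccF S hS a) < sSuccF S hS a :=
        sPredF_lt S hS (lt_filter_nonempty S ha hp)
      exact absurd hle (not_le.mpr hlt)
    exact le_antisymm (not_lt.mp h2) h1
  · have hmax : a = S.max' hS := by
      apply le_antisymm (S.le_max' a ha)
      apply Finset.max'_le
      intro b hb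
      by_contra hba
      push_neg at hba
      exact h (gt_filter_nonempty S hb hba)
    rw [sSuccF_of_empty S hS h, sPredF_min, hmax]

/-- The cyclic permutation attached to `S` (cyclic predecessor on `S`, identity off `S`). -/
def cS : Equiv.Perm (Fin d) where
  toFun a := if a ∈ S then sPredF S hS a else a
  invFun a := if a ∈ S then sSuccF S hS a else a
  left_inv a := by
    dsimp only
    by_cases ha : a ∈ S
    · rw [if_pos ha, if_pos (sPredF_mem S hS a), sSuccF_sPredF S hS ha]
    · rw [if_neg ha, if_neg ha]
  right_inv a := by
    dsimp only
    by_cases ha : a ∈ S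
    · rw [if_pos ha, if_pos (sSuccF_mem S hS a), sPredF_sSuccF S hS ha]
    · rw [if_neg ha, if_neg ha]

lemma cS_apply_mem {a : Fin d} (ha : a ∈ S) : cS S hS a = sPredF S hS a := if_pos ha
lemma cS_apply_not {a : Fin d} (ha : a ∉ S) : cS S hS a = a := if_neg ha
lemma cS_inv_apply_mem {a : Fin d} (ha : a ∈ S) : (cS S hS)⁻¹ a = sSuccF S hS a := if_pos ha
lemma cS_inv_apply_not {a : Fin d} (ha : a ∉ S) : (cS S hS)⁻¹ a = a := if_neg ha

/-- The admissible element attached to `S`. -/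
def xS : AffW d := ⟨Pi.single (S.max' hS) 1, cS S hS⟩

lemma xS_t : (xS S hS).t = Pi.single (S.max' hS) 1 := rfl
lemma xS_w : (xS S hS).w = cS S hS := rfl

lemma min'_le_max' : S.min' hS ≤ S.max' hS := S.min'_le _ (S.max'_mem hS)

/-- The value of `NZ` on `x_S`. -/
lemma NZ_xS {i j : Fin d} (hij : i < j) :
    NZ (xS S hS) i j =
      if j ∉ S ∧ i ∈ S ∧ i = sPredF S hS j then 1
      else if i ∉ S ∧ i < S.min' hS ∧ j = S.max' hS then -1 else 0 := by
  have hM := S.max'_mem hS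
  have hm := S.min'_mem hS
  unfold NZ
  rw [xS_t, xS_w]
  by_cases hi : i ∈ S <;> by_cases hj : j ∈ S
  · -- both in S
    rw [cS_inv_apply_mem S hS hi, cS_inv_apply_mem S hS hj]
    by_cases hjM : j = S.max' hS
    · subst hjM
      have hiM : i ≠ S.max' hS := ne_of_lt hij
      have h1 : (S.filter (fun b => i < b)).Nonempty := gt_filter_nonempty S hM hij
      have h2 : S.min' hS < sSuccF S hS i :=
        lt_of_le_of_lt (S.min'_le i hi) (sSuccF_gt S hS h1)
      rw [sSuccF_max, if_pos h2, Pi.single_eq_of_ne hiM, Pi.single_eq_same,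
        if_neg (by tauto), if_neg (by tauto)]
      ring
    · have hiM : i ≠ S.max' hS := by
        intro hc
        exact hjM (le_antisymm (S.le_max' j hj) (hc ▸ hij.le))
      have h4 : ¬ (sSuccF S hS j < sSuccF S hS i) := by
        push_neg
        calc sSuccF S hS i ≤ j := sSuccF_le S hS hj hij
          _ ≤ sSuccF S hS j := (sSuccF_gt S hS (gt_filter_nonempty S hM
                (lt_of_le_of_ne (S.le_max' j hj) hjM))).le
      rw [if_neg h4, Pi.single_eq_of_ne hiM, Pi.single_eq_of_ne hjM,
        if_neg (by tauto), if_neg (by tauto)]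
      ring
  · -- i ∈ S, j ∉ S
    rw [cS_inv_apply_mem S hS hi, cS_inv_apply_not S hS hj]
    have hjM : j ≠ S.max' hS := fun hc => hj (hc ▸ hM)
    by_cases hiM : i = S.max' hS
    · subst hiM
      have hpred : S.max' hS = sPredF S hS j := by
        have hne : (S.filter (fun b => b < j)).Nonempty := lt_filter_nonempty S hM hij
        rw [sPredF_pos S hS hne]
        refine (le_antisymm ?_ ?_).symm
        · exact Finset.max'_le _ _ _ (fun b hb => S.le_max' b (Finset.mem_filter.mp hb).1)
        · refine Finset.le_max' _ _ ?_
          rw [Finset.mem_filter]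
          exact ⟨hM, hij⟩
      have hnotlt : ¬ (j < sSuccF S hS (S.max' hS)) := by
        rw [sSuccF_max]
        exact not_lt.mpr (((S.min'_le _ hM).trans hij.le))
      rw [if_neg hnotlt, Pi.single_eq_same, Pi.single_eq_of_ne hjM,
        if_pos ⟨hj, hM, hpred⟩]
      ring
    · by_cases hcase : j < sSuccF S hS i
      · have hpred : i = sPredF S hS j := by
          have hne2 : (S.filter (fun b => b < j)).Nonempty := lt_filter_nonempty S hi hij
          rw [sPredF_pos S hS hne2]
          refine (le_antisymm ?_ ?_).symm
          · apply Finset.max'_le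
            intro b hb
            rw [Finset.mem_filter] at hb
            by_contra hbi
            push_neg at hbi
            exact absurd hb.2 (not_lt.mpr (hcase.le.trans (sSuccF_le S hS hb.1 hbi)))
          · refine Finset.le_max' _ _ ?_
            rw [Finset.mem_filter]
            exact ⟨hi, hij⟩
        rw [if_pos hcase, Pi.single_eq_of_ne hiM, Pi.single_eq_of_ne hjM,
          if_pos ⟨hj, hi, hpred⟩]
        ring
      · have hpredn : ¬ (i = sPredF S hS j) := by
          intro hc
          apply hcase
          by_contra hc2
          push_neg at hc2
          have h5 : sSuccF S hS i ≠ j := fun he => hj (he ▸ sSuccF_mem S hS i)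
          have h6 : sSuccF S hS i < j := lt_of_le_of_ne hc2 h5
          have h7 : sSuccF S hS i ≤ sPredF S hS j := le_sPredF S hS (sSuccF_mem S hS i) h6
          rw [← hc] at h7
          have hne : (S.filter (fun b => i < b)).Nonempty :=
            gt_filter_nonempty S hM (lt_of_le_of_ne (S.le_max' i hi) hiM)
          exact absurd (sSuccF_gt S hS hne) (not_lt.mpr h7)
        rw [if_neg hcase, Pi.single_eq_of_ne hiM, Pi.single_eq_of_ne hjM,
          if_neg (by tauto), if_neg (by tauto)]
        ring
  · -- i ∉ S, j ∈ S
    rw [cS_inv_apply_not S hS hi, cS_inv_apply_mem S hS hj]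
    have hiM : i ≠ S.max' hS := fun hc => hi (hc ▸ hM)
    by_cases hjM : j = S.max' hS
    · subst hjM
      rw [sSuccF_max]
      have him : i ≠ S.min' hS := fun hc => hi (hc ▸ hm)
      by_cases hcase : i < S.min' hS
      · rw [if_neg (not_lt.mpr hcase.le), Pi.single_eq_of_ne hiM, Pi.single_eq_same,
          if_neg (by tauto), if_pos ⟨hi, hcase, rfl⟩]
        ring
      · rw [if_pos (lt_of_le_of_ne (not_lt.mp hcase) (Ne.symm him)),
          Pi.single_eq_of_ne hiM, Pi.single_eq_same, if_neg (by tauto), if_neg (by tauto)]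
        ring
    · have hne : (S.filter (fun b => j < b)).Nonempty :=
        gt_filter_nonempty S hM (lt_of_le_of_ne (S.le_max' j hj) hjM)
      have hnotlt : ¬ (sSuccF S hS j < i) := not_lt.mpr ((hij.trans (sSuccF_gt S hS hne)).le)
      rw [if_neg hnotlt, Pi.single_eq_of_ne hiM, Pi.single_eq_of_ne (fun hc => hjM hc : j ≠ S.max' hS),
        if_neg (by tauto), if_neg (by tauto)]
      ring
  · -- both out
    rw [cS_inv_apply_not S hS hi, cS_inv_apply_not S hS hj]
    have hiM : i ≠ S.max' hS := fun hc => hi (hc ▸ hM)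
    have hjM : j ≠ S.max' hS := fun hc => hj (hc ▸ hM)
    have h1 : ¬ (j ∉ S ∧ i ∈ S ∧ i = sPredF S hS j) := by tauto
    have h2 : ¬ (i ∉ S ∧ i < S.min' hS ∧ j = S.max' hS) := by tauto
    rw [if_neg (not_lt.mpr hij.le), Pi.single_eq_of_ne hiM, Pi.single_eq_of_ne hjM,
      if_neg h1, if_neg h2]
    ring

lemma len_xS : len (xS S hS) = d - S.card := by
  classical
  rw [len_eq_sum]
  have hrw : ∀ ij ∈ Finset.univ.filter (fun ij : Fin d × Fin d => ij.1 < ij.2),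
      (NZ (xS S hS) ij.1 ij.2).natAbs =
      if (ij.2 ∉ S ∧ ij.1 ∈ S ∧ ij.1 = sPredF S hS ij.2) ∨
         (ij.1 ∉ S ∧ ij.1 < S.min' hS ∧ ij.2 = S.max' hS) then 1 else 0 := by
    intro ij hij
    rw [Finset.mem_filter] at hij
    rw [NZ_xS S hS hij.2]
    by_cases h1 : ij.2 ∉ S ∧ ij.1 ∈ S ∧ ij.1 = sPredF S hS ij.2
    · rw [if_pos h1, if_pos (Or.inl h1)]; rfl
    · rw [if_neg h1]
      by_cases h2 : ij.1 ∉ S ∧ ij.1 < S.min' hS ∧ ij.2 = S.max' hS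
      · rw [if_pos h2, if_pos (Or.inr h2)]; rfl
      · rw [if_neg h2, if_neg (by tauto)]; rfl
  rw [Finset.sum_congr rfl hrw, Finset.sum_boole]
  have hcard : ((Finset.univ.filter (fun ij : Fin d × Fin d => ij.1 < ij.2)).filter
      (fun ij => (ij.2 ∉ S ∧ ij.1 ∈ S ∧ ij.1 = sPredF S hS ij.2) ∨
         (ij.1 ∉ S ∧ ij.1 < S.min' hS ∧ ij.2 = S.max' hS))).card
      = (Finset.univ \ S).card := by
    apply Finset.card_bij' (fun ij (_ : ij ∈ _) => if ij.2 ∈ S then ij.1 else ij.2)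
      (fun g (_ : g ∈ _) => if g < S.min' hS then (g, S.max' hS) else (sPredF S hS g, g))
    · rintro ij hij
      rw [Finset.mem_filter] at hij
      rcases hij.2 with ⟨hj, -, -⟩ | ⟨hi, -, hjM⟩
      · rw [if_neg hj]
        simp [hj]
      · have hj2 : ij.2 ∈ S := by rw [hjM]; exact S.max'_mem hS
        rw [if_pos hj2]
        simp [hi]
    · rintro g hg
      rw [Finset.mem_sdiff] at hg
      have hgS : g ∉ S := hg.2
      by_cases hgm : g < S.min' hS
      · rw [if_pos hgm]
        rw [Finset.mem_filter, Finset.mem_filter]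
        exact ⟨⟨Finset.mem_univ _, lt_of_lt_of_le hgm (min'_le_max' S hS)⟩,
          Or.inr ⟨hgS, hgm, rfl⟩⟩
      · rw [if_neg hgm]
        have hmg : S.min' hS < g :=
          lt_of_le_of_ne (not_lt.mp hgm) (fun hc => hgS (hc ▸ S.min'_mem hS))
        have hne : (S.filter (fun b => b < g)).Nonempty :=
          lt_filter_nonempty S (S.min'_mem hS) hmg
        rw [Finset.mem_filter, Finset.mem_filter]
        exact ⟨⟨Finset.mem_univ _, sPredF_lt S hS hne⟩,
          Or.inl ⟨hgS, sPredF_mem S hS g, rfl⟩⟩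
    · rintro ij hij
      simp only [Finset.mem_filter, Finset.mem_univ, true_and] at hij
      rcases hij.2 with ⟨hj, hi, hpred⟩ | ⟨hi, him, hjM⟩
      · rw [if_neg hj]
        have : ¬ (ij.2 < S.min' hS) := not_lt.mpr ((S.min'_le _ hi).trans hij.1.le)
        rw [if_neg this, ← hpred]
      · have hj2 : ij.2 ∈ S := by rw [hjM]; exact S.max'_mem hS
        rw [if_pos hj2, if_pos him]
        exact Prod.ext rfl hjM.symm
    · rintro g hg
      rw [Finset.mem_sdiff] at hg
      by_cases hgm : g < S.min' hS
      · rw [if_pos hgm, if_pos (S.max'_mem hS)]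
      · rw [if_neg hgm, if_neg hg.2]
  rw [hcard, Finset.card_sdiff_of_subset (Finset.subset_univ S), Finset.card_univ, Fintype.card_fin,
    Nat.cast_id]

end XS

/-! ## Part D/E: insertion steps and classification of descents -/

section Insert

variable (S : Finset (Fin d)) (hS : S.Nonempty)

lemma sPredF_eq_of {g b : Fin d} (hb : b ∈ S) (hbg : b < g)
    (hmax : ∀ c ∈ S, c < g → c ≤ b) : sPredF S hS g = b := by
  rw [sPredF_pos S hS (lt_filter_nonempty S hb hbg)]
  apply le_antisymm
  · apply Finset.max'_le
    intro c hc
    rw [Finset.mem_filter] at hc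
    exact hmax c hc.1 hc.2
  · refine Finset.le_max' _ b ?_
    rw [Finset.mem_filter]
    exact ⟨hb, hbg⟩

lemma sSuccF_eq_of {g b : Fin d} (hb : b ∈ S) (hgb : g < b)
    (hmin : ∀ c ∈ S, g < c → b ≤ c) : sSuccF S hS g = b := by
  rw [sSuccF_pos S hS (gt_filter_nonempty S hb hgb)]
  apply le_antisymm
  · refine Finset.min'_le _ b ?_
    rw [Finset.mem_filter]
    exact ⟨hb, hgb⟩
  · apply Finset.le_min'
    intro c hc
    rw [Finset.mem_filter] at hc
    exact hmin c hc.1 hc.2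

lemma sSuccF_eq_min_of_lt {g : Fin d} (h : g < S.min' hS) : sSuccF S hS g = S.min' hS :=
  sSuccF_eq_of S hS (S.min'_mem hS) h (fun c hc _ => S.min'_le c hc)

lemma sSuccF_eq_min_of_max_lt {g : Fin d} (h : S.max' hS < g) : sSuccF S hS g = S.min' hS := by
  apply sSuccF_of_empty
  rintro ⟨b, hb⟩
  rw [Finset.mem_filter] at hb
  exact absurd (hb.2.trans_le (S.le_max' b hb.1)) (not_lt.mpr h.le)

lemma sPredF_eq_max_of_max_lt {g : Fin d} (h : S.max' hS < g) : sPredF S hS g = S.max' hS :=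
  sPredF_eq_of S hS (S.max'_mem hS) h (fun c hc _ => S.le_max' c hc)

lemma sPredF_eq_max_of_lt_min {g : Fin d} (h : g < S.min' hS) : sPredF S hS g = S.max' hS := by
  apply sPredF_of_empty
  rintro ⟨b, hb⟩
  rw [Finset.mem_filter] at hb
  exact absurd (lt_of_le_of_lt (S.min'_le b hb.1) hb.2) (not_lt.mpr h.le)

lemma sSuccF_sPredF_notmem {g : Fin d} (hg : g ∉ S) (hmg : S.min' hS < g) :
    sSuccF S hS (sPredF S hS g) = sSuccF S hS g := by
  by_cases hMg : S.max' hS < g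
  · rw [sPredF_eq_max_of_max_lt S hS hMg, sSuccF_max, sSuccF_eq_min_of_max_lt S hS hMg]
  · -- g < max'
    have hgM : g < S.max' hS :=
      lt_of_le_of_ne (not_lt.mp hMg) (fun hc => hg (hc ▸ S.max'_mem hS))
    have hp0 : sPredF S hS g < g := sPredF_lt S hS (lt_filter_nonempty S (S.min'_mem hS) hmg)
    have hs : g < sSuccF S hS g := sSuccF_gt S hS (gt_filter_nonempty S (S.max'_mem hS) hgM)
    apply sSuccF_eq_of
    · exact sSuccF_mem S hS g
    · exact hp0.trans hs
    · intro c hc hpc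
      rcases lt_trichotomy c g with hcg | rfl | hcg
      · exact absurd (le_sPredF S hS hc hcg) (not_le.mpr hpc)
      · exact absurd hc hg
      · exact sSuccF_le S hS hc hcg

/-- The permutation part of the insertion identity. -/
lemma cS_insert {g : Fin d} (hg : g ∉ S) (a : Fin d) :
    cS S hS (Equiv.swap (sSuccF S hS g) g a) = cS (insert g S) (S.insert_nonempty g) a := by
  have hM := S.max'_mem hS
  have hm := S.min'_mem hS
  have hgS' : g ∈ insert g S := Finset.mem_insert_self g S
  have hsub : ∀ c ∈ S, c ∈ insert g S := fun c hc => Finset.mem_insert_of_mem hc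
  set s := sSuccF S hS g with hsdef
  have hsmem : s ∈ S := sSuccF_mem S hS g
  have hsg : s ≠ g := fun hc => hg (hc ▸ hsmem)
  have hmax' : (insert g S).max' (S.insert_nonempty g) = max (S.max' hS) g := by
    apply le_antisymm
    · apply Finset.max'_le
      intro c hc
      rcases Finset.mem_insert.mp hc with rfl | h
      · exact le_max_right _ _
      · exact le_trans (S.le_max' c h) (le_max_left _ _)
    · apply max_le
      · exact Finset.le_max' _ _ (Finset.mem_insert_of_mem (S.max'_mem hS))
      · exact Finset.le_max' _ _ (Finset.mem_insert_self g S)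
  by_cases hag : a = g
  · rw [hag]
    rw [Equiv.swap_apply_right, cS_apply_mem S hS hsmem,
      cS_apply_mem (insert g S) (S.insert_nonempty g) hgS']
    -- sPredF S s = sPredF S' g
    rcases lt_trichotomy g (S.min' hS) with hI | hI | hI
    · -- g < min
      have hsm : s = S.min' hS := sSuccF_eq_min_of_lt S hS hI
      rw [hsm, sPredF_min]
      have : sPredF (insert g S) (S.insert_nonempty g) g = (insert g S).max' (S.insert_nonempty g) := by
        apply sPredF_of_empty
        rintro ⟨b, hb⟩
        rw [Finset.mem_filter] at hb
        rcases Finset.mem_insert.mp hb.1 with rfl | hbS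
        · exact absurd hb.2 (lt_irrefl b)
        · exact absurd (hb.2.trans hI) (not_lt.mpr (S.min'_le b hbS))
      rw [this, hmax']
      exact (max_eq_left (hI.le.trans (min'_le_max' S hS))).symm
    · exact absurd (hI ▸ hm : g ∈ S) hg
    · -- min < g
      by_cases hMg : S.max' hS < g
      · -- g > max
        have hsm : s = S.min' hS := sSuccF_eq_min_of_max_lt S hS hMg
        rw [hsm, sPredF_min]
        apply (sPredF_eq_of (insert g S) (S.insert_nonempty g) (hsub _ hM) hMg ?_).symm
        intro c hc hcg
        rcases Finset.mem_insert.mp hc with rfl | hcS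
        · exact absurd hcg (lt_irrefl c)
        · exact S.le_max' c hcS
      · have hgM : g < S.max' hS :=
          lt_of_le_of_ne (not_lt.mp hMg) (fun hc => hg (hc ▸ hM))
        have hp0lt : sPredF S hS g < g := sPredF_lt S hS (lt_filter_nonempty S hm hI)
        have hp0mem : sPredF S hS g ∈ S := sPredF_mem S hS g
        have hgs : g < s := sSuccF_gt S hS (gt_filter_nonempty S hM hgM)
        have e1 : sPredF S hS s = sPredF S hS g := by
          apply sPredF_eq_of S hS hp0mem (hp0lt.trans hgs)
          intro c hc hcs
          rcases lt_trichotomy c g with h' | rfl | h'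
          · exact le_sPredF S hS hc h'
          · exact absurd hc hg
          · exact absurd (sSuccF_le S hS hc h') (not_le.mpr hcs)
        rw [e1]
        apply (sPredF_eq_of (insert g S) (S.insert_nonempty g) (hsub _ hp0mem) hp0lt ?_).symm
        intro c hc hcg
        rcases Finset.mem_insert.mp hc with rfl | hcS
        · exact absurd hcg (lt_irrefl c)
        · exact le_sPredF S hS hcS hcg
  · by_cases has : a = s
    · rw [has]
      rw [Equiv.swap_apply_left, cS_apply_not S hS hg, cS_apply_mem (insert g S) (S.insert_nonempty g) (hsub _ hsmem)]
      -- goal : g = sPredF S' s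
      by_cases hMg : S.max' hS < g
      · -- s = min S; elements of S' below it: none
        have hsm : s = S.min' hS := sSuccF_eq_min_of_max_lt S hS hMg
        have hemp : sPredF (insert g S) (S.insert_nonempty g) s = (insert g S).max' (S.insert_nonempty g) := by
          apply sPredF_of_empty
          rintro ⟨b, hb⟩
          rw [Finset.mem_filter] at hb
          rcases Finset.mem_insert.mp hb.1 with rfl | hbS
          · exact absurd ((hb.2.trans_le (hsm ▸ min'_le_max' S hS))) (not_lt.mpr hMg.le)
          · exact absurd (hb.2.trans_le (hsm ▸ S.min'_le b hbS)) (lt_irrefl b)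
        rw [hemp, hmax', max_eq_right hMg.le]
      · -- g < max S, so g < s
        have hgM : g < S.max' hS :=
          lt_of_le_of_ne (not_lt.mp hMg) (fun hc => hg (hc ▸ hM))
        have hgs : g < s := sSuccF_gt S hS (gt_filter_nonempty S hM hgM)
        apply (sPredF_eq_of (insert g S) (S.insert_nonempty g) hgS' hgs ?_).symm
        intro c hc hcs
        rcases Finset.mem_insert.mp hc with rfl | hcS
        · exact le_refl c
        · rcases lt_trichotomy c g with h' | rfl | h'
          · exact h'.le
          · exact absurd hcS hg
          · exact absurd (sSuccF_le S hS hcS h') (not_le.mpr hcs)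
    · -- a ∉ {g, s} : swap fixes a
      rw [Equiv.swap_apply_of_ne_of_ne has hag]
      by_cases haS : a ∈ S
      · rw [cS_apply_mem S hS haS, cS_apply_mem (insert g S) (S.insert_nonempty g) (hsub _ haS)]
        by_cases hga : g < a
        · -- then s < a
          have hfne : (S.filter (fun b => g < b)).Nonempty := gt_filter_nonempty S haS hga
          have hgs : g < s := sSuccF_gt S hS hfne
          have hsa : s < a := lt_of_le_of_ne (sSuccF_le S hS haS hga) (fun hc => has hc.symm)
          have hpa : sPredF S hS a ∈ S := sPredF_mem S hS a
          have hplt : sPredF S hS a < a := sPredF_lt S hS (lt_filter_nonempty S hsmem hsa)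
          have hsle : s ≤ sPredF S hS a := le_sPredF S hS hsmem hsa
          apply (sPredF_eq_of (insert g S) (S.insert_nonempty g) (hsub _ hpa) hplt ?_).symm
          intro c hc hca
          rcases Finset.mem_insert.mp hc with rfl | hcS
          · exact (hgs.trans_le hsle).le
          · exact le_sPredF S hS hcS hca
        · -- a < g
          have hag2 : a < g := lt_of_le_of_ne (not_lt.mp hga) hag
          by_cases hne : (S.filter (fun b => b < a)).Nonempty
          · have hpa : sPredF S hS a ∈ S := sPredF_mem S hS a
            have hplt : sPredF S hS a < a := sPredF_lt S hS hne
            apply (sPredF_eq_of (insert g S) (S.insert_nonempty g) (hsub _ hpa) hplt ?_).symm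
            intro c hc hca
            rcases Finset.mem_insert.mp hc with rfl | hcS
            · exact absurd (hca.trans hag2) (lt_irrefl c)
            · exact le_sPredF S hS hcS hca
          · -- a = min S
            have ham : a = S.min' hS := by
              apply le_antisymm _ (S.min'_le a haS)
              apply Finset.le_min'
              intro b hb
              by_contra hba
              push_neg at hba
              exact hne (lt_filter_nonempty S hb hba)
            have hMg : ¬ S.max' hS < g := by
              intro h
              exact has (ham.trans (sSuccF_eq_min_of_max_lt S hS h).symm)
            have hgM : g < S.max' hS :=
              lt_of_le_of_ne (not_lt.mp hMg) (fun hc => hg (hc ▸ hM))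
            have hemp : sPredF (insert g S) (S.insert_nonempty g) a = (insert g S).max' (S.insert_nonempty g) := by
              apply sPredF_of_empty
              rintro ⟨b, hb⟩
              rw [Finset.mem_filter] at hb
              rcases Finset.mem_insert.mp hb.1 with rfl | hbS
              · exact absurd (hb.2.trans hag2) (lt_irrefl b)
              · exact absurd (hb.2.trans_le (ham.trans_le (S.min'_le b hbS))) (lt_irrefl b)
            rw [sPredF_of_empty S hS hne, hemp, hmax', max_eq_left hgM.le]
      · rw [cS_apply_not S hS haS, cS_apply_not (insert g S) (S.insert_nonempty g)]
        rw [Finset.mem_insert]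
        push_neg
        exact ⟨hag, haS⟩

end Insert

section Main

variable (S : Finset (Fin d)) (hS : S.Nonempty)

lemma max'_insert' (g : Fin d) :
    (insert g S).max' (S.insert_nonempty g) = max (S.max' hS) g := by
  apply le_antisymm
  · apply Finset.max'_le
    intro c hc
    rcases Finset.mem_insert.mp hc with rfl | h
    · exact le_max_right _ _
    · exact le_trans (S.le_max' c h) (le_max_left _ _)
  · apply max_le
    · exact Finset.le_max' _ _ (Finset.mem_insert_of_mem (S.max'_mem hS))
    · exact Finset.le_max' _ _ (Finset.mem_insert_self g S)

lemma cS_inv_eq_iff (a b : Fin d) : (cS S hS)⁻¹ a = b ↔ a = cS S hS b := by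
  constructor
  · intro h
    rw [← h, Equiv.Perm.apply_inv_self]
  · intro h
    rw [h, Equiv.Perm.inv_apply_self]

/-- The key insertion identity `x_S ⋅ r = x_{S ∪ {g}}`. -/
lemma xS_mul_refl {g : Fin d} (hg : g ∉ S) :
    xS S hS * refl (sSuccF S hS g) g (if S.max' hS < g then -1 else 0) =
      xS (insert g S) (S.insert_nonempty g) := by
  have hM := S.max'_mem hS
  have hm := S.min'_mem hS
  have hgM : g ≠ S.max' hS := fun hc => hg (hc ▸ hM)
  have hsg : sSuccF S hS g ≠ g := fun hc => hg (hc ▸ sSuccF_mem S hS g)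
  have hwpart : (xS S hS * refl (sSuccF S hS g) g
      (if S.max' hS < g then -1 else 0)).w = (xS (insert g S) (S.insert_nonempty g)).w := by
    rw [mul_w, xS_w, xS_w]
    apply Equiv.ext
    intro a
    rw [Equiv.Perm.mul_apply]
    show cS S hS (Equiv.swap (sSuccF S hS g) g a) = _
    exact cS_insert S hS hg a
  by_cases hMg : S.max' hS < g
  · rw [if_pos hMg] at hwpart ⊢
    have hs : sSuccF S hS g = S.min' hS := sSuccF_eq_min_of_max_lt S hS hMg
    apply AffW.ext _ hwpart
    funext i
    have hmax : (insert g S).max' (S.insert_nonempty g) = g := by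
      rw [max'_insert' S hS g]
      exact max_eq_right hMg.le
    show (xS S hS).t i + (refl (sSuccF S hS g) g (-1)).t ((cS S hS)⁻¹ i) = _
    rw [xS_t, xS_t, hmax, hs]
    have e1 : (refl (S.min' hS) g (-1)).t ((cS S hS)⁻¹ i)
        = (Pi.single g 1 : Fin d → ℤ) ((cS S hS)⁻¹ i)
          - (Pi.single (S.min' hS) 1 : Fin d → ℤ) ((cS S hS)⁻¹ i) := by
      unfold refl
      simp only [Pi.smul_apply, Pi.sub_apply, smul_eq_mul]
      ring
    rw [e1]
    have hc1 : ((cS S hS)⁻¹ i = g) ↔ i = g := by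
      rw [cS_inv_eq_iff, cS_apply_not S hS hg]
    have hc2 : ((cS S hS)⁻¹ i = S.min' hS) ↔ i = S.max' hS := by
      rw [cS_inv_eq_iff, cS_apply_mem S hS hm, sPredF_min]
    rw [Pi.single_apply, Pi.single_apply, Pi.single_apply, Pi.single_apply]
    by_cases h1 : i = g
    · rw [if_pos h1, if_pos (hc1.mpr h1), if_neg (h1 ▸ hgM),
        if_neg (fun hc => (h1 ▸ hgM : i ≠ S.max' hS) (hc2.mp hc))]
      ring
    · rw [if_neg h1, if_neg (fun hc => h1 (hc1.mp hc))]
      by_cases h2 : i = S.max' hS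
      · rw [if_pos h2, if_pos (hc2.mpr h2)]
        ring
      · rw [if_neg h2, if_neg (fun hc => h2 (hc2.mp hc))]
        ring
  · rw [if_neg hMg] at hwpart ⊢
    apply AffW.ext _ hwpart
    funext i
    have hmax : (insert g S).max' (S.insert_nonempty g) = S.max' hS := by
      rw [max'_insert' S hS g]
      exact max_eq_left (le_of_lt (lt_of_le_of_ne (not_lt.mp hMg) hgM))
    show (xS S hS).t i + (refl (sSuccF S hS g) g 0).t ((cS S hS)⁻¹ i) = _
    rw [xS_t, xS_t, hmax]
    have e1 : (refl (sSuccF S hS g) g 0).t ((cS S hS)⁻¹ i) = 0 := by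
      unfold refl
      simp
    rw [e1, add_zero]

lemma card_le_d : S.card ≤ d := by
  have := Finset.card_le_univ S
  rwa [Fintype.card_fin] at this

lemma len_xS_insert_lt {g : Fin d} (hg : g ∉ S) :
    len (xS (insert g S) (S.insert_nonempty g)) < len (xS S hS) := by
  rw [len_xS, len_xS, Finset.card_insert_of_notMem hg]
  have h1 := card_le_d (insert g S)
  rw [Finset.card_insert_of_notMem hg] at h1
  have h2 : 1 ≤ S.card := Finset.card_pos.mpr hS
  omega

lemma sep_symm {x : AffW d} {i j : Fin d} {k : ℤ} (h : Separates x i j k) :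
    Separates x j i (-k) := by
  unfold Separates at h ⊢
  push_cast
  nlinarith [h]

lemma sep_xS_lt {a b : Fin d} {κ : ℤ} (hab : a < b) (h : Separates (xS S hS) a b κ) :
    ∃ g, g ∉ S ∧ ((S.min' hS < g ∧ a = sPredF S hS g ∧ b = g ∧ κ = 0) ∨
      (g < S.min' hS ∧ a = g ∧ b = S.max' hS ∧ κ = -1)) := by
  have hk := (sep_iff (xS S hS) hab κ).mp h
  rw [NZ_xS S hS hab, Finset.mem_Ico] at hk
  by_cases h1 : b ∉ S ∧ a ∈ S ∧ a = sPredF S hS b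
  · rw [if_pos h1] at hk
    refine ⟨b, h1.1, Or.inl ⟨lt_of_le_of_lt (S.min'_le a h1.2.1) hab, h1.2.2, rfl, ?_⟩⟩
    omega
  · rw [if_neg h1] at hk
    by_cases h2 : a ∉ S ∧ a < S.min' hS ∧ b = S.max' hS
    · rw [if_pos h2] at hk
      refine ⟨a, h2.1, Or.inr ⟨h2.2.1, rfl, h2.2.2, ?_⟩⟩
      omega
    · rw [if_neg h2] at hk
      omega

lemma sep_xS_cases {a b : Fin d} {κ : ℤ} (hab : a ≠ b) (h : Separates (xS S hS) a b κ) :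
    ∃ g, g ∉ S ∧
      ((S.min' hS < g ∧ ((a = sPredF S hS g ∧ b = g ∧ κ = 0) ∨
          (b = sPredF S hS g ∧ a = g ∧ κ = 0)))
       ∨ (g < S.min' hS ∧ ((a = g ∧ b = S.max' hS ∧ κ = -1) ∨
          (b = g ∧ a = S.max' hS ∧ κ = 1)))) := by
  rcases hab.lt_or_gt with hlt | hlt
  · obtain ⟨g, hg, hc⟩ := sep_xS_lt S hS hlt h
    rcases hc with ⟨h1, h2, h3, h4⟩ | ⟨h1, h2, h3, h4⟩
    · exact ⟨g, hg, Or.inl ⟨h1, Or.inl ⟨h2, h3, h4⟩⟩⟩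
    · exact ⟨g, hg, Or.inr ⟨h1, Or.inl ⟨h2, h3, h4⟩⟩⟩
  · obtain ⟨g, hg, hc⟩ := sep_xS_lt S hS hlt (sep_symm h)
    rcases hc with ⟨h1, h2, h3, h4⟩ | ⟨h1, h2, h3, h4⟩
    · exact ⟨g, hg, Or.inl ⟨h1, Or.inr ⟨h2, h3, by omega⟩⟩⟩
    · exact ⟨g, hg, Or.inr ⟨h1, Or.inr ⟨h2, h3, by omega⟩⟩⟩

/-- Every length-decreasing reflection from `x_T` adds one element to `T`. -/
lemma descend (T : Finset (Fin d)) (hT : T.Nonempty) (r : AffW d) (hr : IsRefl r)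
    (hlen : len (xS T hT * r) < len (xS T hT)) :
    ∃ g, g ∉ T ∧ xS T hT * r = xS (insert g T) (T.insert_nonempty g) := by
  obtain ⟨p, q, k, hpq, rfl⟩ := isRefl_iff.mp hr
  have hsep : Separates (xS T hT) ((xS T hT).w p) ((xS T hT).w q)
      (k + (xS T hT).t ((xS T hT).w p) - (xS T hT).t ((xS T hT).w q)) := by
    by_contra hns
    exact absurd hlen (not_lt.mpr (not_sep_le (xS T hT) p q k hpq hns))
  have hab : (xS T hT).w p ≠ (xS T hT).w q := fun hc => hpq ((xS T hT).w.injective hc)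
  rw [xS_w] at hsep hab
  rw [xS_t] at hsep
  have hM := T.max'_mem hT
  have hm := T.min'_mem hT
  obtain ⟨g, hg, hcases⟩ := sep_xS_cases T hT hab hsep
  refine ⟨g, hg, ?_⟩
  rw [← xS_mul_refl T hT hg]
  have hgM : g ≠ T.max' hT := fun hc => hg (hc ▸ hM)
  suffices hsuff : refl p q k = refl (sSuccF T hT g) g (if T.max' hT < g then -1 else 0) by
    rw [hsuff]
  have hsingle_g : (Pi.single (T.max' hT) 1 : Fin d → ℤ) g = 0 := Pi.single_eq_of_ne hgM 1
  rcases hcases with ⟨hmg, hor⟩ | ⟨hgm, hor⟩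
  · -- S.min' < g
    have hfne : (T.filter (fun b => b < g)).Nonempty := lt_filter_nonempty T hm hmg
    have hpred_lt : sPredF T hT g < g := sPredF_lt T hT hfne
    have hsingle_p : (Pi.single (T.max' hT) 1 : Fin d → ℤ) (sPredF T hT g)
        = if T.max' hT < g then 1 else 0 := by
      by_cases hMg : T.max' hT < g
      · rw [if_pos hMg, sPredF_eq_max_of_max_lt T hT hMg, Pi.single_eq_same]
      · have hgM' : g < T.max' hT := lt_of_le_of_ne (not_lt.mp hMg) hgM
        have : sPredF T hT g ≠ T.max' hT := ne_of_lt (hpred_lt.trans hgM')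
        rw [if_neg hMg, Pi.single_eq_of_ne this]
    rcases hor with ⟨hcp, hcq, hκ⟩ | ⟨hcq, hcp, hκ⟩
    · -- cS p = sPredF g, cS q = g
      have hq : q = g := by
        apply (cS T hT).injective
        rw [hcq, cS_apply_not T hT hg]
      have hp : p = sSuccF T hT g := by
        have h1 : p = (cS T hT)⁻¹ (sPredF T hT g) := by
          rw [← hcp, Equiv.Perm.inv_apply_self]
        rw [h1, cS_inv_apply_mem T hT (sPredF_mem T hT g),
          sSuccF_sPredF_notmem T hT hg hmg]
      have hk : k = if T.max' hT < g then -1 else 0 := by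
        rw [hcp, hcq, hsingle_g, hsingle_p] at hκ
        by_cases hMg : T.max' hT < g
        · rw [if_pos hMg] at hκ ⊢; omega
        · rw [if_neg hMg] at hκ ⊢; omega
      rw [hp, hq, hk]
    · -- cS q = sPredF g, cS p = g
      have hp : p = g := by
        apply (cS T hT).injective
        rw [hcp, cS_apply_not T hT hg]
      have hq : q = sSuccF T hT g := by
        have h1 : q = (cS T hT)⁻¹ (sPredF T hT g) := by
          rw [← hcq, Equiv.Perm.inv_apply_self]
        rw [h1, cS_inv_apply_mem T hT (sPredF_mem T hT g),
          sSuccF_sPredF_notmem T hT hg hmg]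
      have hk : k = if T.max' hT < g then 1 else 0 := by
        rw [hcp, hcq, hsingle_g, hsingle_p] at hκ
        by_cases hMg : T.max' hT < g
        · rw [if_pos hMg] at hκ ⊢; omega
        · rw [if_neg hMg] at hκ ⊢; omega
      rw [hp, hq, hk, refl_symm]
      by_cases hMg : T.max' hT < g
      · rw [if_pos hMg, if_pos hMg]
      · rw [if_neg hMg, if_neg hMg, neg_zero]
  · -- g < min'
    have hMg : ¬ (T.max' hT < g) := not_lt.mpr ((hgm.trans_le (min'_le_max' T hT)).le)
    have hs : sSuccF T hT g = T.min' hT := sSuccF_eq_min_of_lt T hT hgm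
    have hmM : (cS T hT)⁻¹ (T.max' hT) = T.min' hT := by
      rw [cS_inv_apply_mem T hT hM, sSuccF_max]
    rcases hor with ⟨hcp, hcq, hκ⟩ | ⟨hcq, hcp, hκ⟩
    · -- cS p = g, cS q = max'
      have hp : p = g := by
        apply (cS T hT).injective
        rw [hcp, cS_apply_not T hT hg]
      have hq : q = T.min' hT := by
        have h1 : q = (cS T hT)⁻¹ (T.max' hT) := by
          rw [← hcq, Equiv.Perm.inv_apply_self]
        rw [h1, hmM]
      have hk : k = 0 := by
        rw [hcp, hcq, hsingle_g, Pi.single_eq_same] at hκ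
        omega
      rw [hp, hq, hk, if_neg hMg, hs, refl_symm, neg_zero]
    · -- cS q = g, cS p = max'
      have hq : q = g := by
        apply (cS T hT).injective
        rw [hcq, cS_apply_not T hT hg]
      have hp : p = T.min' hT := by
        have h1 : p = (cS T hT)⁻¹ (T.max' hT) := by
          rw [← hcp, Equiv.Perm.inv_apply_self]
        rw [h1, hmM]
      have hk : k = 0 := by
        rw [hcp, hcq, hsingle_g, Pi.single_eq_same] at hκ
        omega
      rw [hp, hq, hk, if_neg hMg, hs]

lemma xS_congr (T T' : Finset (Fin d)) (hT : T.Nonempty) (hT' : T'.Nonempty)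
    (h : T = T') : xS T hT = xS T' hT' := by
  subst h
  rfl

lemma xS_singleton (j : Fin d) :
    xS {j} (Finset.singleton_nonempty j) = transl (Pi.single j 1) := by
  apply AffW.ext
  · rw [xS_t, Finset.max'_singleton]
    rfl
  · rw [xS_w]
    show cS {j} (Finset.singleton_nonempty j) = 1
    apply Equiv.ext
    intro a
    show (if a ∈ ({j} : Finset (Fin d)) then sPredF {j} (Finset.singleton_nonempty j) a else a)
      = a
    by_cases ha : a ∈ ({j} : Finset (Fin d))
    · rw [if_pos ha]
      have haj : a = j := Finset.mem_singleton.mp ha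
      subst haj
      have hemp : ¬ (({a} : Finset (Fin d)).filter (fun b => b < a)).Nonempty := by
        rintro ⟨b, hb⟩
        rw [Finset.mem_filter, Finset.mem_singleton] at hb
        exact absurd hb.2 (hb.1 ▸ lt_irrefl a)
      rw [sPredF_of_empty _ _ hemp, Finset.max'_singleton]
    · rw [if_neg ha]

lemma cS_ne_of_mem {a : Fin d} (ha : a ∈ S) (haM : a ≠ S.max' hS) : cS S hS a ≠ a := by
  rw [cS_apply_mem S hS ha]
  by_cases h : (S.filter (fun b => b < a)).Nonempty
  · exact ne_of_lt (sPredF_lt S hS h)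
  · rw [sPredF_of_empty S hS h]
    exact Ne.symm haM

lemma xS_inj {T T' : Finset (Fin d)} {hT : T.Nonempty} {hT' : T'.Nonempty}
    (h : xS T hT = xS T' hT') : T = T' := by
  have ht := congrArg AffW.t h
  rw [xS_t, xS_t] at ht
  have hw : cS T hT = cS T' hT' := congrArg AffW.w h
  have hM : T.max' hT = T'.max' hT' := by
    by_contra hc
    have h2 := congrFun ht (T.max' hT)
    rw [Pi.single_eq_same, Pi.single_eq_of_ne hc] at h2
    exact one_ne_zero h2
  apply Finset.Subset.antisymm <;> intro a ha
  · by_cases haM : a = T.max' hT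
    · rw [haM, hM]
      exact T'.max'_mem hT'
    · by_contra haT'
      have h1 := cS_ne_of_mem T hT ha haM
      rw [hw, cS_apply_not T' hT' haT'] at h1
      exact h1 rfl
  · by_cases haM : a = T'.max' hT'
    · rw [haM, ← hM]
      exact T.max'_mem hT
    · by_contra haT
      have h1 := cS_ne_of_mem T' hT' ha haM
      rw [← hw, cS_apply_not T hT haT] at h1
      exact h1 rfl

end Main

lemma ble_xS_singleton : ∀ (n : ℕ) (T : Finset (Fin d)) (hT : T.Nonempty) (j : Fin d),
    j ∈ T → T.card = n → ble (xS T hT) (xS {j} (Finset.singleton_nonempty j)) := by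
  intro n
  induction n with
  | zero =>
    intro T hT j hj hcard
    exact absurd hcard (Finset.card_ne_zero_of_mem hj)
  | succ n ih =>
    intro T hT j hj hcard
    by_cases hTj : T = {j}
    · subst hTj
      exact Relation.ReflTransGen.refl
    · obtain ⟨g, hgT, hgj⟩ : ∃ g ∈ T, g ≠ j := by
        by_contra hc
        push_neg at hc
        exact hTj (Finset.eq_singleton_iff_unique_mem.mpr ⟨hj, fun x hx => hc x hx⟩)
      have hgT' : g ∉ T.erase g := Finset.notMem_erase g T
      have hTe : (T.erase g).Nonempty := ⟨j, Finset.mem_erase.mpr ⟨Ne.symm hgj, hj⟩⟩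
      have hins : insert g (T.erase g) = T := Finset.insert_erase hgT
      have hstep : xS (T.erase g) hTe * refl (sSuccF (T.erase g) hTe g) g
          (if (T.erase g).max' hTe < g then -1 else 0) = xS T hT := by
        rw [xS_mul_refl (T.erase g) hTe hgT']
        exact xS_congr _ _ _ _ hins
      have hne : sSuccF (T.erase g) hTe g ≠ g := by
        intro hc
        have hmem := sSuccF_mem (T.erase g) hTe g
        rw [hc] at hmem
        exact hgT' hmem
      refine Relation.ReflTransGen.head ⟨⟨_, ?_, hstep.symm⟩, ?_⟩
        (ih (T.erase g) hTe j (Finset.mem_erase.mpr ⟨Ne.symm hgj, hj⟩) ?_)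
      · exact isRefl_iff.mpr ⟨_, _, _, hne, rfl⟩
      · show len (xS T hT) < len (xS (T.erase g) hTe)
        have := len_xS_insert_lt (T.erase g) hTe hgT'
        rwa [xS_congr (insert g (T.erase g)) T _ hT hins] at this
      · rw [Finset.card_erase_of_mem hgT, hcard]
        rfl

lemma reach {x : AffW d} {j : Fin d}
    (h : ble x (xS {j} (Finset.singleton_nonempty j))) :
    ∃ (T : Finset (Fin d)) (hT : T.Nonempty), j ∈ T ∧ x = xS T hT := by
  unfold ble bleR at h
  induction h using Relation.ReflTransGen.head_induction_on with
  | refl => exact ⟨{j}, Finset.singleton_nonempty j, Finset.mem_singleton_self j, rfl⟩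
  | head hstep htail ih =>
    obtain ⟨T, hT, hjT, rfl⟩ := ih
    obtain ⟨⟨r, hr, heq⟩, hlen⟩ := hstep
    obtain ⟨g, hg, heq2⟩ := descend T hT r hr (by rw [← heq]; exact hlen)
    exact ⟨insert g T, T.insert_nonempty g, Finset.mem_insert_of_mem hjT,
      by rw [heq, heq2]⟩

lemma crit_xS (T : Finset (Fin d)) (hT : T.Nonempty) : crit (xS T hT) = ↑T := by
  ext j
  simp only [crit, Set.mem_setOf_eq, Finset.mem_coe]
  rw [← xS_singleton j]
  constructor
  · intro h
    obtain ⟨T', hT', hj, heq⟩ := reach h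
    rw [xS_inj heq]
    exact hj
  · intro hj
    exact ble_xS_singleton T.card T hT j hj rfl

end AffW

open AffW in
/-- For every `w ∈ Adm(μ₀)` (`G = GL_d`, `μ₀ = (1,0,…,0)`), the codimension
`ℓ(t_{μ₀}) − ℓ(w)` equals `|S(w)| − 1`; equivalently (avoiding truncated
subtraction) `ℓ(t_{μ₀}) + 1 = ℓ(w) + |S(w)|`. -/
theorem codim_eq_card_crit_sub_one (d : ℕ) [NeZero d] (w : AffW d)
    (hw : w ∈ Adm (mu0 d)) :
    len (transl (mu0 d)) + 1 = len w + (crit w).ncard := by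
  obtain ⟨σ, hble⟩ := hw
  have hp : transl (pact σ (mu0 d)) = transl (Pi.single (σ 0) 1) := by
    congr 1
    funext i
    unfold pact mu0
    rw [Pi.single_apply, Pi.single_apply]
    by_cases hi : i = σ 0
    · rw [if_pos (by rw [hi, Equiv.Perm.inv_apply_self]), if_pos hi]
    · rw [if_neg (fun hc => hi (by rw [← Equiv.Perm.apply_inv_self σ i, hc])), if_neg hi]
  rw [hp, ← xS_singleton (σ 0)] at hble
  obtain ⟨T, hT, hjT, rfl⟩ := reach hble
  have h0 : transl (mu0 d) = xS {(0 : Fin d)} (Finset.singleton_nonempty 0) := by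
    rw [xS_singleton]
    rfl
  rw [h0, len_xS, len_xS, crit_xS, Set.ncard_coe_finset, Finset.card_singleton]
  have h1 : 1 ≤ T.card := Finset.card_pos.mpr hT
  have h2 : T.card ≤ d := card_le_d T
  have h3 : 1 ≤ d := Nat.pos_of_ne_zero (NeZero.ne d)
  omega
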